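/- Let X, Y be locally convex Hausdorff real topological vector spaces, F : X × Y → ℝ ∪ {±∞}, and h : X → ℝ ∪ {+∞} proper convex lsc. Assume (H₅): for every a' ∈ dom h*, inf_{x∈X}(F(x,0) − ⟨a',x⟩) = inf_{x∈X}(F**(x,0) − ⟨a',x⟩) ≠ +∞, and (H₆): the set {(x',s) ∈ X*×ℝ : ∃μ ∈ Y*, F*(x',μ) ≤ s} is weak*-closed regarding gph h*. Then [∀x ∈ X, F(x,0) ≥ h(x)] holds if and only if [∀a' ∈ dom h*, ∃μ ∈ Y* with F*(a',μ) ≤ h*(a')]. -/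

import Mathlib

variable {X Y : Type*}
  [AddCommGroup X] [Module ℝ X] [TopologicalSpace X] [IsTopologicalAddGroup X]
  [ContinuousSMul ℝ X] [LocallyConvexSpace ℝ X] [T2Space X]
  [AddCommGroup Y] [Module ℝ Y] [TopologicalSpace Y] [IsTopologicalAddGroup Y]
  [ContinuousSMul ℝ Y] [LocallyConvexSpace ℝ Y] [T2Space Y]

/-- Fenchel conjugate of `F : X × Y → ℝ̄`, with first dual variable in the
weak* dual of `X`. -/
noncomputable def wConj (F : X → Y → EReal) (x' : WeakDual ℝ X) (y' : Y →L[ℝ] ℝ) : EReal :=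
  ⨆ p : X × Y, (((x' p.1 + y' p.2 : ℝ) : EReal) - F p.1 p.2)

/-- Fenchel biconjugate of `F : X × Y → ℝ̄` on `X × Y`. -/
noncomputable def wBiconj (F : X → Y → EReal) (x : X) (y : Y) : EReal :=
  ⨆ w : WeakDual ℝ X × (Y →L[ℝ] ℝ), (((w.1 x + w.2 y : ℝ) : EReal) - wConj F w.1 w.2)

/-- Fenchel conjugate of `h : X → ℝ ∪ {+∞}` on the weak* dual of `X`. -/
noncomputable def hConj (h : X → EReal) (a' : WeakDual ℝ X) : EReal :=
  ⨆ x : X, (((a' x : ℝ) : EReal) - h x)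

/-!
(A) ⇒ (B): for `a' ∈ dom h*` with `t = h*(a')`, (A) gives `inf_x (F(x,0) - a'x) ≥ -t`, hence by
(H₅) `F**(x,0) ≥ a'x - t` for all `x`. Now `F**(x,0)` is the supremum of `x'(x) - s` over the set
`E = {(x',s) | ∃ μ, F*(x',μ) ≤ s}`, which is convex and upward closed in `s`. A point `(a',t)` outside
its weak*-closure is separated from it by a functional `(x',s) ↦ x'(x) + c s` (the dual of `X*` with
the weak* topology is `X`); since (H₅) also yields a nonvertical halfspace containing `E`, the
separator can be tilted to `c = -1`, contradicting `F**(x,0) ≥ a'x - t`. So `(a',t)` lies in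
`cl E ∩ gph h*`, and (H₆) puts it in `E`.

(B) ⇒ (A): if `F(x,0) < r < h(x)`, the same separation argument applied to the closed convex
epigraph of `h` gives a continuous affine minorant `a' - β` of `h` with `a'x - β > r`. Then
`h*(a') ≤ β`, and (B) gives `μ` with `a'x - F(x,0) ≤ F*(a',μ) ≤ β`, a contradiction.
-/

open Set

lemma EReal.coe_sub_le_coe_iff {a b : ℝ} {e : EReal} :
    (a : EReal) - e ≤ b ↔ ((a - b : ℝ) : EReal) ≤ e := by
  induction e using EReal.rec with
  | bot => simp [-EReal.coe_sub]
  | coe v =>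
    rw [← EReal.coe_sub, EReal.coe_le_coe_iff, EReal.coe_le_coe_iff]
    constructor <;> intro h <;> linarith
  | top => simp

lemma EReal.coe_sub_le_of_forall {a b : ℝ} {e : EReal} (H : ∀ s : ℝ, e < s → a - s ≤ b) :
    (a : EReal) - e ≤ b :=
  coe_sub_le_coe_iff.2 <| le_of_forall_lt_iff_le.1 fun s hs ↦
    EReal.coe_le_coe_iff.2 (by linarith [H s hs])

lemma EReal.coe_combo_sub_le_combo {a b s₁ s₂ θ σ : ℝ} {e : EReal} (hθ : 0 ≤ θ) (hσ : 0 ≤ σ)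
    (hθσ : θ + σ = 1) (h₁ : (a : EReal) - e ≤ s₁) (h₂ : (b : EReal) - e ≤ s₂) :
    ((θ * a + σ * b : ℝ) : EReal) - e ≤ (θ * s₁ + σ * s₂ : ℝ) := by
  rw [coe_sub_le_coe_iff] at *
  obtain rfl : σ = 1 - θ := by linarith
  rcases le_total (a - s₁) (b - s₂) with h | h
  · refine le_trans (EReal.coe_le_coe_iff.2 ?_) h₂
    nlinarith [mul_le_mul_of_nonneg_left h hθ]
  · refine le_trans (EReal.coe_le_coe_iff.2 ?_) h₁
    nlinarith [mul_le_mul_of_nonneg_left h hσ]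

lemma ContinuousLinearMap.apply_prod_real {V : Type*} [AddCommGroup V] [Module ℝ V]
    [TopologicalSpace V] (f : StrongDual ℝ (V × ℝ)) (v : V) (s : ℝ) :
    f (v, s) = f (v, 0) + s * f (0, 1) := by
  have hvs : (v, s) = (v, 0) + s • (0, 1) := by simp
  rw [hvs, map_add, map_smul, smul_eq_mul]

section Separation

variable {V : Type*} [AddCommGroup V] [Module ℝ V] [TopologicalSpace V]
  [IsTopologicalAddGroup V] [ContinuousSMul ℝ V] [LocallyConvexSpace ℝ V]
  {C : Set (V × ℝ)} {z : V × ℝ}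

lemma exists_separation_of_upwardClosed (hC : Convex ℝ C)
    (hup : ∀ ⦃v s t⦄, (v, s) ∈ C → s ≤ t → (v, t) ∈ C) (hz : z ∉ closure C) :
    (∃ (g : StrongDual ℝ V) (β : ℝ), (∀ p ∈ C, g p.1 - p.2 < β) ∧ β < g z.1 - z.2) ∨
      ∃ (g : StrongDual ℝ V) (u : ℝ), (∀ p ∈ C, g p.1 < u) ∧ u < g z.1 := by
  rcases C.eq_empty_or_nonempty with rfl | ⟨p₀, hp₀⟩
  · exact Or.inl ⟨0, -z.2 - 1, by simp, by simp⟩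
  obtain ⟨f, u, hfC, hfz⟩ := geometric_hahn_banach_closed_point hC.closure isClosed_closure hz
  set g : StrongDual ℝ V := f.comp (ContinuousLinearMap.inl ℝ V ℝ)
  set c := f (0, 1)
  have hf (p : V × ℝ) : f p = g p.1 + p.2 * c := f.apply_prod_real p.1 p.2
  have hgC (p) (hp : p ∈ C) : g p.1 + p.2 * c < u := hf p ▸ hfC p (subset_closure hp)
  have hc : c ≤ 0 := by
    by_contra! hc
    set t := max p₀.2 ((u - g p₀.1) / c)
    have hlt := hgC (p₀.1, t) (hup hp₀ (le_max_left _ _))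
    have hle : (u - g p₀.1) / c * c ≤ t * c := mul_le_mul_of_nonneg_right (le_max_right _ _) hc.le
    rw [div_mul_cancel₀ _ hc.ne'] at hle
    linarith
  rcases hc.lt_or_eq with hc | hc
  · have hk : 0 < (-c)⁻¹ := inv_pos.2 (neg_pos.2 hc)
    have hc1 : c * (-c)⁻¹ = -1 := by rw [inv_neg, mul_neg, mul_inv_cancel₀ hc.ne]
    have hscale (v : V) (s : ℝ) : (-c)⁻¹ * g v - s = (-c)⁻¹ * (g v + s * c) := by
      linear_combination (-s) * hc1
    refine Or.inl ⟨(-c)⁻¹ • g, (-c)⁻¹ * u, fun p hp ↦ ?_, ?_⟩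
    · rw [smul_apply, smul_eq_mul, hscale]
      exact mul_lt_mul_of_pos_left (hgC p hp) hk
    · rw [smul_apply, smul_eq_mul, hscale, ← hf]
      exact mul_lt_mul_of_pos_left hfz hk
  · refine Or.inr ⟨g, u, fun p hp ↦ by simpa [hc] using hgC p hp, by simpa [hf, hc] using hfz⟩

lemma exists_nonvertical_separation (hC : Convex ℝ C)
    (hup : ∀ ⦃v s t⦄, (v, s) ∈ C → s ≤ t → (v, t) ∈ C)
    (hbdd : ∃ (g : StrongDual ℝ V) (β : ℝ), ∀ p ∈ C, g p.1 - p.2 ≤ β) (hz : z ∉ closure C) :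
    ∃ (g : StrongDual ℝ V) (β : ℝ), (∀ p ∈ C, g p.1 - p.2 ≤ β) ∧ β < g z.1 - z.2 := by
  rcases exists_separation_of_upwardClosed hC hup hz with ⟨g, β, hgC, hgz⟩ | ⟨φ, u, hφC, hφz⟩
  · exact ⟨g, β, fun p hp ↦ (hgC p hp).le, hgz⟩
  -- a vertical separator is tilted by adding a large multiple of it to a nonvertical bound
  obtain ⟨g₀, β₀, hg₀⟩ := hbdd
  set A := β₀ - (g₀ z.1 - z.2)
  have hd : 0 < φ z.1 - u := sub_pos.2 hφz
  set r := |A| / (φ z.1 - u) + 1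
  have hr : 0 ≤ r := by positivity
  have hrA : A < r * (φ z.1 - u) := by
    rw [add_mul, div_mul_cancel₀ _ hd.ne', one_mul]
    linarith [le_abs_self A]
  refine ⟨g₀ + r • φ, β₀ + r * u, fun p hp ↦ ?_, ?_⟩
  · have := mul_le_mul_of_nonneg_left (hφC p hp).le hr
    simp only [add_apply, smul_apply, smul_eq_mul]
    linarith [hg₀ p hp]
  · simp only [add_apply, smul_apply, smul_eq_mul]
    linarith

end Separation

lemma LowerSemicontinuous.isClosed_realEpigraph {E : Type*} [TopologicalSpace E] {h : E → EReal}
    (hlsc : LowerSemicontinuous h) : IsClosed {p : E × ℝ | h p.1 ≤ p.2} :=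
  (lowerSemicontinuous_iff_isClosed_epigraph.1 hlsc).preimage
    (continuous_id.prodMap continuous_coe_real_ereal)

section Epigraph

variable {E : Type*} [AddCommGroup E] [Module ℝ E] [TopologicalSpace E]
  [IsTopologicalAddGroup E] [ContinuousSMul ℝ E] [LocallyConvexSpace ℝ E] {h : E → EReal}

theorem exists_affine_minorant_gt (hconvex : Convex ℝ {p : E × ℝ | h p.1 ≤ (p.2 : EReal)})
    (hlsc : LowerSemicontinuous h) {x₀ : E} {t₀ : ℝ} (hx₀ : h x₀ = t₀) {x : E} {r : ℝ}
    (hr : (r : EReal) < h x) :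
    ∃ (g : StrongDual ℝ E) (β : ℝ), (∀ y, (g y : EReal) - h y ≤ β) ∧ r < g x - β := by
  set C := {p : E × ℝ | h p.1 ≤ (p.2 : EReal)}
  have hup : ∀ ⦃v s t⦄, (v, s) ∈ C → s ≤ t → (v, t) ∈ C :=
    fun _ _ _ hs hst ↦ hs.trans (EReal.coe_le_coe_iff.2 hst)
  have hclosure := hlsc.isClosed_realEpigraph.closure_eq
  have hbdd : ∃ (g : StrongDual ℝ E) (β : ℝ), ∀ p ∈ C, g p.1 - p.2 ≤ β := by
    have hout : (x₀, t₀ - 1) ∉ closure C := by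
      simp only [hclosure, C, mem_ofPred_eq, hx₀, EReal.coe_le_coe_iff, not_le]
      linarith
    rcases exists_separation_of_upwardClosed hconvex hup hout with ⟨g, β, hg, -⟩ | ⟨g, u, hg, hu⟩
    · exact ⟨g, β, fun p hp ↦ (hg p hp).le⟩
    · exact absurd (hg (x₀, t₀) (by simp [C, hx₀])) hu.not_gt
  obtain ⟨g, β, hgC, hgx⟩ := exists_nonvertical_separation (z := (x, r)) hconvex hup hbdd
    (by rw [hclosure]; exact hr.not_ge)
  exact ⟨g, β, fun y ↦ EReal.coe_sub_le_of_forall fun s hs ↦ hgC (y, s) hs.le, by linarith⟩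

end Epigraph

lemma WeakDual.exists_eq_eval {E : Type*} [AddCommGroup E] [Module ℝ E] [TopologicalSpace E]
    (φ : StrongDual ℝ (WeakDual ℝ E)) : ∃ x : E, ∀ x' : WeakDual ℝ E, φ x' = x' x := by
  obtain ⟨x, hx⟩ := LinearMap.dualEmbedding_surjective (topDualPairing ℝ E) φ
  exact ⟨x, fun x' ↦ by rw [← hx]; rfl⟩

instance WeakDual.instLocallyConvexSpace {E : Type*} [AddCommGroup E] [Module ℝ E]
    [TopologicalSpace E] : LocallyConvexSpace ℝ (WeakDual ℝ E) :=
  WeakBilin.locallyConvexSpace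

section Conjugate

variable {E G : Type*} [AddCommGroup E] [Module ℝ E] [TopologicalSpace E]
  [AddCommGroup G] [Module ℝ G] [TopologicalSpace G] (Φ : E → G → EReal)

lemma sub_le_wConj (x' : WeakDual ℝ E) (μ : G →L[ℝ] ℝ) (x : E) (y : G) :
    ((x' x + μ y : ℝ) : EReal) - Φ x y ≤ wConj Φ x' μ :=
  le_iSup (fun p : E × G ↦ ((x' p.1 + μ p.2 : ℝ) : EReal) - Φ p.1 p.2) (x, y)

lemma sub_le_wBiconj (x' : WeakDual ℝ E) (μ : G →L[ℝ] ℝ) (x : E) (y : G) :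
    ((x' x + μ y : ℝ) : EReal) - wConj Φ x' μ ≤ wBiconj Φ x y :=
  le_iSup (fun w : WeakDual ℝ E × (G →L[ℝ] ℝ) ↦
    ((w.1 x + w.2 y : ℝ) : EReal) - wConj Φ w.1 w.2) (x', μ)

lemma sub_le_hConj (h : E → EReal) (a' : WeakDual ℝ E) (x : E) :
    ((a' x : ℝ) : EReal) - h x ≤ hConj h a' :=
  le_iSup (fun x ↦ ((a' x : ℝ) : EReal) - h x) x

/-- The projection to `X* × ℝ` of the epigraph of `F*`. -/
def conjEpiProj : Set (WeakDual ℝ E × ℝ) :=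
  {z | ∃ μ : G →L[ℝ] ℝ, wConj Φ z.1 μ ≤ z.2}

lemma convex_conjEpiProj : Convex ℝ (conjEpiProj Φ) := by
  rintro ⟨x₁, s₁⟩ ⟨μ₁, hμ₁⟩ ⟨x₂, s₂⟩ ⟨μ₂, hμ₂⟩ θ σ hθ hσ hθσ
  refine ⟨θ • μ₁ + σ • μ₂, iSup_le fun p ↦ ?_⟩
  have hx : (θ • (x₁, s₁) + σ • (x₂, s₂)).1 p.1 = θ * x₁ p.1 + σ * x₂ p.1 := rfl
  convert EReal.coe_combo_sub_le_combo hθ hσ hθσ ((sub_le_wConj Φ x₁ μ₁ p.1 p.2).trans hμ₁)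
    ((sub_le_wConj Φ x₂ μ₂ p.1 p.2).trans hμ₂) using 3
  · simp only [hx, add_apply, smul_apply, smul_eq_mul]
    ring
  · rfl

lemma upwardClosed_conjEpiProj ⦃x' : WeakDual ℝ E⦄ ⦃s t : ℝ⦄ (hs : (x', s) ∈ conjEpiProj Φ)
    (hst : s ≤ t) : (x', t) ∈ conjEpiProj Φ :=
  let ⟨μ, hμ⟩ := hs
  ⟨μ, hμ.trans (EReal.coe_le_coe_iff.2 hst)⟩

lemma wBiconj_zero_le_iff (x : E) (β : ℝ) :
    wBiconj Φ x 0 ≤ β ↔ ∀ z ∈ conjEpiProj Φ, z.1 x - z.2 ≤ β := by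
  constructor
  · rintro hle ⟨x', s⟩ ⟨μ, hμ⟩
    have hx := (sub_le_wBiconj Φ x' μ x 0).trans hle
    rw [map_zero, add_zero, EReal.coe_sub_le_coe_iff] at hx
    have := EReal.coe_le_coe_iff.1 (hx.trans hμ)
    linarith
  · refine fun H ↦ iSup_le fun w ↦ ?_
    rw [map_zero, add_zero]
    exact EReal.coe_sub_le_of_forall fun s hs ↦ H (w.1, s) ⟨w.2, hs.le⟩

theorem mem_closure_conjEpiProj {a' : WeakDual ℝ E} {t : ℝ}
    (hle : ((-t : ℝ) : EReal) ≤ ⨅ x, (wBiconj Φ x 0 - a' x))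
    (hfin : (⨅ x, (wBiconj Φ x 0 - a' x)) ≠ ⊤) :
    (a', t) ∈ closure (conjEpiProj Φ) := by
  by_contra hout
  have hbdd : ∃ (g : StrongDual ℝ (WeakDual ℝ E)) (β : ℝ),
      ∀ z ∈ conjEpiProj Φ, g z.1 - z.2 ≤ β := by
    obtain ⟨x₁, hx₁⟩ := not_forall.1 (mt iInf_eq_top.2 hfin)
    have hne : wBiconj Φ x₁ 0 ≠ ⊤ := fun htop ↦ hx₁ (by rw [htop, EReal.top_sub_coe])
    exact ⟨WeakBilin.eval (topDualPairing ℝ E) x₁, _,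
      (wBiconj_zero_le_iff Φ x₁ _).1 (EReal.le_coe_toReal hne)⟩
  obtain ⟨g, β, hgC, hgz⟩ := exists_nonvertical_separation (convex_conjEpiProj Φ)
    (upwardClosed_conjEpiProj Φ) hbdd hout
  obtain ⟨x, hx⟩ := WeakDual.exists_eq_eval g
  simp only [hx] at hgC hgz
  have hβ := (wBiconj_zero_le_iff Φ x β).2 hgC
  have := hle.trans ((iInf_le _ x).trans (EReal.sub_le_sub hβ le_rfl))
  rw [← EReal.coe_sub, EReal.coe_le_coe_iff] at this
  linarith

end Conjugate

/-- Corollary 4.1: under `(H₅)` and `(H₆)` the `S^h_F`-procedure is valid, i.e.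
`(𝔸_h) ⟺ (𝔹_h)`. -/
theorem stmt_17 (F : X → Y → EReal) (h : X → EReal)
    (hbot : ∀ x, h x ≠ ⊥) (hproper : ∃ x, h x ≠ ⊤)
    (hconvex : Convex ℝ {p : X × ℝ | h p.1 ≤ (p.2 : EReal)})
    (hlsc : LowerSemicontinuous h)
    (H5 : ∀ a' : WeakDual ℝ X, hConj h a' ≠ ⊤ →
      (⨅ x : X, (F x 0 - ((a' x : ℝ) : EReal))) =
          (⨅ x : X, (wBiconj F x 0 - ((a' x : ℝ) : EReal))) ∧
        (⨅ x : X, (F x 0 - ((a' x : ℝ) : EReal))) ≠ ⊤)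
    (H6 : closure {z : WeakDual ℝ X × ℝ | ∃ μ : Y →L[ℝ] ℝ,
            wConj F z.1 μ ≤ (z.2 : EReal)} ∩
          {z : WeakDual ℝ X × ℝ | hConj h z.1 = (z.2 : EReal)} =
        {z : WeakDual ℝ X × ℝ | ∃ μ : Y →L[ℝ] ℝ, wConj F z.1 μ ≤ (z.2 : EReal)} ∩
          {z : WeakDual ℝ X × ℝ | hConj h z.1 = (z.2 : EReal)}) :
    (∀ x : X, h x ≤ F x 0) ↔
      ∀ a' : WeakDual ℝ X, hConj h a' ≠ ⊤ →
        ∃ μ : Y →L[ℝ] ℝ, wConj F a' μ ≤ hConj h a' := by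
  obtain ⟨x₀, hx₀⟩ := hproper
  have hx₀_fin : h x₀ = (h x₀).toReal := (EReal.coe_toReal hx₀ (hbot x₀)).symm
  constructor
  · intro hA a' hne
    obtain ⟨H5_eq, H5_fin⟩ := H5 a' hne
    have hne_bot : hConj h a' ≠ ⊥ := ne_bot_of_le_ne_bot
      (by rw [hx₀_fin, ← EReal.coe_sub]; exact EReal.coe_ne_bot _) (sub_le_hConj h a' x₀)
    set t := (hConj h a').toReal
    have ht : hConj h a' = t := (EReal.coe_toReal hne hne_bot).symm
    have hle : ((-t : ℝ) : EReal) ≤ ⨅ x, (F x 0 - a' x) := le_iInf fun x ↦ by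
      have hx := EReal.coe_sub_le_coe_iff.1 (ht ▸ sub_le_hConj h a' x)
      calc ((-t : ℝ) : EReal) = ((a' x - t : ℝ) : EReal) - a' x := by
            rw [← EReal.coe_sub, sub_sub_cancel_left]
        _ ≤ F x 0 - a' x := EReal.sub_le_sub (hx.trans (hA x)) le_rfl
    have hcl := mem_closure_conjEpiProj F (H5_eq ▸ hle) (H5_eq ▸ H5_fin)
    obtain ⟨⟨μ, hμ⟩, -⟩ := (Set.ext_iff.1 H6 (a', t)).1 ⟨hcl, ht⟩
    exact ⟨μ, ht ▸ hμ⟩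
  · intro hB x
    by_contra! hFh
    obtain ⟨r, hFr, hrh⟩ := EReal.lt_iff_exists_real_btwn.1 hFh
    obtain ⟨g, β, hg, hgx⟩ := exists_affine_minorant_gt hconvex hlsc hx₀_fin hrh
    have hβ : hConj h (StrongDual.toWeakDual g) ≤ β := iSup_le hg
    obtain ⟨μ, hμ⟩ := hB _ (ne_top_of_le_ne_top (EReal.coe_ne_top β) hβ)
    have hFx : ((g x : ℝ) : EReal) - F x 0 ≤ β := by
      simpa using (sub_le_wConj F _ μ x 0).trans (hμ.trans hβ)
    rw [EReal.coe_sub_le_coe_iff] at hFx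
    exact (EReal.coe_lt_coe_iff.2 hgx).not_ge (hFx.trans hFr.le)
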